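/- For any graph G = (V,E) with a vertex u having two distinct neighbours v, w that are not adjacent to each other, the elements g^u, g^u·g^v, g^u·g^w of the graph-state stabiliser group form an AvN triple, having components (X,Z,Z), (Y,Y,Z), (Y,Z,Y) at coordinates (u,v,w) respectively. -/

import Mathlib

/-- Pauli labels. -/
inductive PLbl : Type
  | I | X | Y | Z
deriving DecidableEq

instance : Fintype PLbl :=
  ⟨{PLbl.I, PLbl.X, PLbl.Y, PLbl.Z}, by intro x; cases x <;> simp⟩

open PLbl

/-- Multiplication of Pauli labels, discarding the phase. -/
def lmul : PLbl → PLbl → PLbl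
  | I, p => p
  | p, I => p
  | X, X => I
  | Y, Y => I
  | Z, Z => I
  | X, Y => Z
  | Y, X => Z
  | Y, Z => X
  | Z, Y => X
  | Z, X => Y
  | X, Z => Y

/-- Phase (as a power of i, in ℤ₄) arising from multiplying two Pauli labels:
XY = iZ, YZ = iX, ZX = iY, YX = -iZ, ZY = -iX, XZ = -iY. -/
def lphase : PLbl → PLbl → ZMod 4
  | X, Y => 1
  | Y, Z => 1
  | Z, X => 1
  | Y, X => 3
  | Z, Y => 3
  | X, Z => 3
  | _, _ => 0

/-- An element of the Pauli group indexed by a finite vertex set V. -/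
def PauliElV (V : Type) [Fintype V] : Type := ZMod 4 × (V → PLbl)

/-- Multiplication in the Pauli group over V. -/
def pmulV {V : Type} [Fintype V] (p q : PauliElV V) : PauliElV V :=
  (p.1 + q.1 + ∑ i, lphase (p.2 i) (q.2 i), fun i => lmul (p.2 i) (q.2 i))

/-- The graph-state generator at a vertex u: X at u, Z at neighbours of u,
I elsewhere, with phase +1. -/
def graphGen {V : Type} [Fintype V] [DecidableEq V] (G : SimpleGraph V)
    [DecidableRel G.Adj] (u : V) : PauliElV V :=
  (0, fun x => if x = u then PLbl.X else if G.Adj u x then PLbl.Z else PLbl.I)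

/-- AvN triple (standard definition): pairwise commuting elements with phases
±1 such that at each coordinate at least two of the components agree, and the
number of coordinates where e and g agree, differ from f, and none is I, is odd. -/
def IsAvNTripleV {V : Type} [Fintype V] [DecidableEq V] (e f g : PauliElV V) : Prop :=
  (e.1 = 0 ∨ e.1 = 2) ∧ (f.1 = 0 ∨ f.1 = 2) ∧ (g.1 = 0 ∨ g.1 = 2) ∧
  pmulV e f = pmulV f e ∧ pmulV f g = pmulV g f ∧ pmulV e g = pmulV g e ∧
  (∀ i, e.2 i = f.2 i ∨ f.2 i = g.2 i ∨ e.2 i = g.2 i) ∧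
  Odd (Finset.univ.filter (fun i =>
    e.2 i = g.2 i ∧ g.2 i ≠ f.2 i ∧ e.2 i ≠ I ∧ f.2 i ≠ I ∧ g.2 i ≠ I)).card

section AvNHelpers

open PLbl

variable {V : Type} [Fintype V] [DecidableEq V]

lemma avn_sum3_aux (f g : V → ZMod 4) (u v w : V) (huv : u ≠ v) (huw : u ≠ w) (hvw : v ≠ w)
    (h : ∀ i, i ≠ u → i ≠ v → i ≠ w → f i = g i)
    (h3 : f u + f v + f w = g u + g v + g w) : ∑ i, f i = ∑ i, g i := by
  have hs : ∀ (k : V → ZMod 4), ∑ i ∈ ({u, v, w} : Finset V), k i = k u + k v + k w := by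
    intro k
    rw [Finset.sum_insert (by simp [huv, huw]), Finset.sum_pair hvw, add_assoc]
  rw [← Finset.sum_add_sum_compl ({u, v, w} : Finset V) f,
      ← Finset.sum_add_sum_compl ({u, v, w} : Finset V) g, hs, hs, h3]
  congr 1
  refine Finset.sum_congr rfl ?_
  intro i hi
  simp only [Finset.mem_compl, Finset.mem_insert, Finset.mem_singleton, not_or] at hi
  exact h i hi.1 hi.2.1 hi.2.2

lemma avn_key0 : ∀ p q : PLbl, (p = Z ∨ p = I) → (q = Z ∨ q = I) → lphase p q = 0 := by decide

lemma avn_key1 : ∀ p q : PLbl, (p = Z ∨ p = I) → (q = Z ∨ q = I) →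
    lphase p (lmul p q) = lphase (lmul p q) p := by decide

lemma avn_key2 : ∀ p q r : PLbl, (p = Z ∨ p = I) → (q = Z ∨ q = I) → (r = Z ∨ r = I) →
    lphase (lmul p q) (lmul p r) = lphase (lmul p r) (lmul p q) := by decide

lemma avn_key3 : ∀ p q r : PLbl, (p = Z ∨ p = I) → (q = Z ∨ q = I) → (r = Z ∨ r = I) →
    ¬(p = lmul p r ∧ lmul p r ≠ lmul p q ∧ p ≠ I ∧ lmul p q ≠ I ∧ lmul p r ≠ I) := by decide

lemma avn_key4 : ∀ p q r : PLbl, (p = Z ∨ p = I) → (q = Z ∨ q = I) → (r = Z ∨ r = I) →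
    (p = lmul p q ∨ lmul p q = lmul p r ∨ p = lmul p r) := by decide

end AvNHelpers

/-- If u has two distinct non-adjacent neighbours v and w, then g^u, g^u·g^v,
g^u·g^w form an AvN triple, with components (X,Z,Z), (Y,Y,Z), (Y,Z,Y) at
coordinates (u,v,w) respectively. -/
theorem graph_gens_avn_star {V : Type} [Fintype V] [DecidableEq V]
    (G : SimpleGraph V) [DecidableRel G.Adj] (u v w : V)
    (huv : G.Adj u v) (huw : G.Adj u w) (hvw : v ≠ w) (hnadj : ¬ G.Adj v w) :
    ((graphGen G u).2 u = X ∧ (graphGen G u).2 v = Z ∧ (graphGen G u).2 w = Z) ∧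
    ((pmulV (graphGen G u) (graphGen G v)).2 u = Y ∧
     (pmulV (graphGen G u) (graphGen G v)).2 v = Y ∧
     (pmulV (graphGen G u) (graphGen G v)).2 w = Z) ∧
    ((pmulV (graphGen G u) (graphGen G w)).2 u = Y ∧
     (pmulV (graphGen G u) (graphGen G w)).2 v = Z ∧
     (pmulV (graphGen G u) (graphGen G w)).2 w = Y) ∧
    IsAvNTripleV (graphGen G u)
      (pmulV (graphGen G u) (graphGen G v))
      (pmulV (graphGen G u) (graphGen G w)) := by
    classical
  have hneuv : u ≠ v := G.ne_of_adj huv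
  have hneuw : u ≠ w := G.ne_of_adj huw
  have hnadj' : ¬ G.Adj w v := fun h => hnadj h.symm
  have hlc : ∀ p q : PLbl, lmul p q = lmul q p := by decide
  have prodext : ∀ (x y : PauliElV V), x.1 = y.1 → x.2 = y.2 → x = y := by
    intro x y h1 h2
    exact Prod.ext h1 h2
  have hau : (graphGen G u).2 u = X := by simp [graphGen]
  have hav : (graphGen G u).2 v = Z := by simp [graphGen, Ne.symm hneuv, huv]
  have haw : (graphGen G u).2 w = Z := by simp [graphGen, Ne.symm hneuw, huw]
  have hbu : (graphGen G v).2 u = Z := by simp [graphGen, hneuv, huv.symm]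
  have hbv : (graphGen G v).2 v = X := by simp [graphGen]
  have hbw : (graphGen G v).2 w = I := by simp [graphGen, Ne.symm hvw, hnadj]
  have hcu : (graphGen G w).2 u = Z := by simp [graphGen, hneuw, huw.symm]
  have hcv : (graphGen G w).2 v = I := by simp [graphGen, hvw, hnadj']
  have hcw : (graphGen G w).2 w = X := by simp [graphGen]
  have haoff : ∀ i, i ≠ u → (graphGen G u).2 i = Z ∨ (graphGen G u).2 i = I := by
    intro i hi
    simp only [graphGen, if_neg hi]
    split <;> simp
  have hboff : ∀ i, i ≠ v → (graphGen G v).2 i = Z ∨ (graphGen G v).2 i = I := by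
    intro i hi
    simp only [graphGen, if_neg hi]
    split <;> simp
  have hcoff : ∀ i, i ≠ w → (graphGen G w).2 i = Z ∨ (graphGen G w).2 i = I := by
    intro i hi
    simp only [graphGen, if_neg hi]
    split <;> simp
  set F := pmulV (graphGen G u) (graphGen G v) with hFdef
  set Gg := pmulV (graphGen G u) (graphGen G w) with hGdef
  have hF2 : ∀ i, F.2 i = lmul ((graphGen G u).2 i) ((graphGen G v).2 i) := fun i => rfl
  have hG2 : ∀ i, Gg.2 i = lmul ((graphGen G u).2 i) ((graphGen G w).2 i) := fun i => rfl
  have hFu : F.2 u = Y := by rw [hF2, hau, hbu]; decide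
  have hFv : F.2 v = Y := by rw [hF2, hav, hbv]; decide
  have hFw : F.2 w = Z := by rw [hF2, haw, hbw]; decide
  have hGu : Gg.2 u = Y := by rw [hG2, hau, hcu]; decide
  have hGv : Gg.2 v = Z := by rw [hG2, hav, hcv]; decide
  have hGw : Gg.2 w = Y := by rw [hG2, haw, hcw]; decide
  have hFsum : ∑ i, lphase ((graphGen G u).2 i) ((graphGen G v).2 i) = 0 := by
    have h := avn_sum3_aux (fun i => lphase ((graphGen G u).2 i) ((graphGen G v).2 i))
      (fun _ => (0 : ZMod 4)) u v w hneuv hneuw hvw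
      (fun i hiu hiv _ => avn_key0 _ _ (haoff i hiu) (hboff i hiv))
      (by simp only [hau, hav, haw, hbu, hbv, hbw]; decide)
    simpa using h
  have hGsum : ∑ i, lphase ((graphGen G u).2 i) ((graphGen G w).2 i) = 0 := by
    have h := avn_sum3_aux (fun i => lphase ((graphGen G u).2 i) ((graphGen G w).2 i))
      (fun _ => (0 : ZMod 4)) u v w hneuv hneuw hvw
      (fun i hiu _ hiw => avn_key0 _ _ (haoff i hiu) (hcoff i hiw))
      (by simp only [hau, hav, haw, hcu, hcv, hcw]; decide)
    simpa using h
  have hF1 : F.1 = 0 := by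
    show (graphGen G u).1 + (graphGen G v).1 + _ = 0
    show (0 : ZMod 4) + 0 + ∑ i, lphase ((graphGen G u).2 i) ((graphGen G v).2 i) = 0
    rw [hFsum]; ring
  have hG1 : Gg.1 = 0 := by
    show (graphGen G u).1 + (graphGen G w).1 + _ = 0
    show (0 : ZMod 4) + 0 + ∑ i, lphase ((graphGen G u).2 i) ((graphGen G w).2 i) = 0
    rw [hGsum]; ring
  have hcomm1 : pmulV (graphGen G u) F = pmulV F (graphGen G u) := by
    have hsum : ∑ i, lphase ((graphGen G u).2 i) (F.2 i)
        = ∑ i, lphase (F.2 i) ((graphGen G u).2 i) := by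
      refine avn_sum3_aux _ _ u v w hneuv hneuw hvw ?_ ?_
      · intro i hiu hiv _
        simp only [hF2]
        exact avn_key1 _ _ (haoff i hiu) (hboff i hiv)
      · simp only [hFu, hFv, hFw, hau, hav, haw]; decide
    refine prodext _ _ ?_ ?_
    · show (graphGen G u).1 + F.1 + ∑ i, lphase ((graphGen G u).2 i) (F.2 i)
        = F.1 + (graphGen G u).1 + ∑ i, lphase (F.2 i) ((graphGen G u).2 i)
      rw [hsum]; ring
    · funext i
      exact hlc _ _
  have hcomm2 : pmulV F Gg = pmulV Gg F := by
    have hsum : ∑ i, lphase (F.2 i) (Gg.2 i) = ∑ i, lphase (Gg.2 i) (F.2 i) := by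
      refine avn_sum3_aux _ _ u v w hneuv hneuw hvw ?_ ?_
      · intro i hiu hiv hiw
        simp only [hF2, hG2]
        exact avn_key2 _ _ _ (haoff i hiu) (hboff i hiv) (hcoff i hiw)
      · simp only [hFu, hFv, hFw, hGu, hGv, hGw]; decide
    refine prodext _ _ ?_ ?_
    · show F.1 + Gg.1 + ∑ i, lphase (F.2 i) (Gg.2 i)
        = Gg.1 + F.1 + ∑ i, lphase (Gg.2 i) (F.2 i)
      rw [hsum]; ring
    · funext i
      exact hlc _ _
  have hcomm3 : pmulV (graphGen G u) Gg = pmulV Gg (graphGen G u) := by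
    have hsum : ∑ i, lphase ((graphGen G u).2 i) (Gg.2 i)
        = ∑ i, lphase (Gg.2 i) ((graphGen G u).2 i) := by
      refine avn_sum3_aux _ _ u v w hneuv hneuw hvw ?_ ?_
      · intro i hiu _ hiw
        simp only [hG2]
        exact avn_key1 _ _ (haoff i hiu) (hcoff i hiw)
      · simp only [hGu, hGv, hGw, hau, hav, haw]; decide
    refine prodext _ _ ?_ ?_
    · show (graphGen G u).1 + Gg.1 + ∑ i, lphase ((graphGen G u).2 i) (Gg.2 i)
        = Gg.1 + (graphGen G u).1 + ∑ i, lphase (Gg.2 i) ((graphGen G u).2 i)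
      rw [hsum]; ring
    · funext i
      exact hlc _ _
  refine ⟨⟨hau, hav, haw⟩, ⟨hFu, hFv, hFw⟩, ⟨hGu, hGv, hGw⟩, ?_, ?_, ?_, hcomm1, hcomm2, hcomm3, ?_, ?_⟩
  · exact Or.inl rfl
  · exact Or.inl hF1
  · exact Or.inl hG1
  · intro i
    by_cases hiu : i = u
    · subst hiu; right; left; rw [hFu, hGu]
    by_cases hiv : i = v
    · subst hiv; right; right; rw [hav, hGv]
    by_cases hiw : i = w
    · subst hiw; left; rw [haw, hFw]
    · simp only [hF2, hG2]
      exact avn_key4 _ _ _ (haoff i hiu) (hboff i hiv) (hcoff i hiw)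
  · have hset : (Finset.univ.filter (fun i =>
        (graphGen G u).2 i = Gg.2 i ∧ Gg.2 i ≠ F.2 i ∧ (graphGen G u).2 i ≠ I ∧
          F.2 i ≠ I ∧ Gg.2 i ≠ I)) = {v} := by
      ext i
      simp only [Finset.mem_filter, Finset.mem_univ, true_and, Finset.mem_singleton]
      constructor
      · rintro ⟨h1, h2, h3, h4, h5⟩
        by_contra hiv
        by_cases hiu : i = u
        · subst hiu; rw [hau, hGu] at h1; exact absurd h1 (by decide)
        by_cases hiw : i = w
        · subst hiw; rw [haw, hGw] at h1; exact absurd h1 (by decide)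
        · refine avn_key3 _ _ _ (haoff i hiu) (hboff i hiv) (hcoff i hiw) ?_
          refine ⟨?_, ?_, h3, ?_, ?_⟩
          · rw [← hG2 i]; exact h1
          · rw [← hG2 i, ← hF2 i]; exact h2
          · rw [← hF2 i]; exact h4
          · rw [← hG2 i]; exact h5
      · rintro rfl
        exact ⟨by rw [hav, hGv], by rw [hGv, hFv]; decide, by rw [hav]; decide,
          by rw [hFv]; decide, by rw [hGv]; decide⟩
    rw [hset, Finset.card_singleton]
    exact odd_one
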